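/- In a finite Möbius plane in which every circle contains exactly q+1 points (q ≥ 2), the total number of circles is q·(q² + 1). -/

import Mathlib

/-!
Fix a circle `A`, a point `p ∈ A` and a point `b ∉ A`. The circles through `p` and `b`
partition the other `|S| - 2` points into blocks of `q - 1`, and they correspond to the points
of `A`: the circle through `p, b, a` for `a ≠ p`, the tangent circle of (M2) for `a = p`.
Hence `|S| = q² + 1`. Counting incident pairs (3-set, circle) then gives
`#circles · C(q + 1, 3) = C(q² + 1, 3)`, and `C(q² + 1, 3) = q (q² + 1) C(q + 1, 3)`.
-/

/-- A finite Möbius plane: a finite set of points `S` with a set of subsets of `S` called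
circles such that (M1) any three pairwise distinct points lie on exactly one circle,
(M2) for every circle `A`, every `a ∈ A` and every `b ∉ A` there is exactly one circle
`B` with `a, b ∈ B` and `A ∩ B = {a}`, and (M3) `|S| ≥ 4` and there are four pairwise
distinct points not lying on a common circle. -/
structure FiniteMoebiusPlane (S : Type*) [Fintype S] where
  circles : Set (Set S)
  M1 : ∀ a b c : S, a ≠ b → b ≠ c → a ≠ c →
    ∃! C : Set S, C ∈ circles ∧ a ∈ C ∧ b ∈ C ∧ c ∈ C
  M2 : ∀ A ∈ circles, ∀ a ∈ A, ∀ b ∉ A,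
    ∃! B : Set S, B ∈ circles ∧ a ∈ B ∧ b ∈ B ∧ A ∩ B = {a}
  M3 : 4 ≤ Fintype.card S ∧ ∃ p : Fin 4 → S, Function.Injective p ∧
    ∀ C ∈ circles, ¬ ∀ i : Fin 4, p i ∈ C

namespace FiniteMoebiusPlane

open Finset

variable {S : Type*} [Fintype S] (MP : FiniteMoebiusPlane S)

theorem eq_of_three_mem {C D : Set S} (hC : C ∈ MP.circles) (hD : D ∈ MP.circles)
    {a b c : S} (hab : a ≠ b) (hbc : b ≠ c) (hac : a ≠ c)
    (haC : a ∈ C) (hbC : b ∈ C) (hcC : c ∈ C)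
    (haD : a ∈ D) (hbD : b ∈ D) (hcD : c ∈ D) : C = D :=
  (MP.M1 a b c hab hbc hac).unique ⟨hC, haC, hbC, hcC⟩ ⟨hD, haD, hbD, hcD⟩

theorem exists_inter_eq_pair {A C : Set S} (hA : A ∈ MP.circles) (hC : C ∈ MP.circles)
    (hAC : A ≠ C) {p : S} (hpA : p ∈ A) (hpC : p ∈ C) : ∃ a, A ∩ C = {p, a} := by
  by_cases h : ∃ a ∈ A ∩ C, a ≠ p
  · obtain ⟨a, ⟨haA, haC⟩, hap⟩ := h
    refine ⟨a, Set.Subset.antisymm (fun x ⟨hxA, hxC⟩ => ?_) (Set.insert_subset ⟨hpA, hpC⟩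
      (Set.singleton_subset_iff.2 ⟨haA, haC⟩))⟩
    by_contra hx
    simp only [Set.mem_insert_iff, Set.mem_singleton_iff, not_or] at hx
    exact hAC (MP.eq_of_three_mem hA hC hap.symm (Ne.symm hx.2) (Ne.symm hx.1)
      hpA haA hxA hpC haC hxC)
  · push Not at h
    refine ⟨p, ?_⟩
    rw [Set.pair_eq_singleton, Set.eq_singleton_iff_unique_mem]
    exact ⟨⟨hpA, hpC⟩, h⟩

theorem existsUnique_circle_superset {u : Finset S} (hu : u.card = 3) :
    ∃! C, C ∈ MP.circles ∧ ↑u ⊆ C := by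
  classical
  obtain ⟨a, b, c, hab, hac, hbc, rfl⟩ := card_eq_three.1 hu
  simpa [Set.insert_subset_iff] using MP.M1 a b c hab hbc hac

theorem card_circles_mul_choose_three {k : ℕ} (hk : ∀ C ∈ MP.circles, Nat.card C = k) :
    Nat.card MP.circles * k.choose 3 = (Fintype.card S).choose 3 := by
  classical
  have := card_mul_eq_card_mul (fun C (u : Finset S) => ↑u ⊆ C)
    (s := MP.circles.toFinset) (t := univ.powersetCard 3) (m := k.choose 3) (n := 1) ?_ ?_
  · simpa [Nat.card_eq_card_toFinset] using this
  · intro C hC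
    rw [← hk C (Set.mem_toFinset.1 hC), Nat.card_eq_card_toFinset, ← card_powersetCard]
    congr 1
    ext u
    simp [bipartiteAbove, mem_powersetCard, and_comm, ← Finset.coe_subset]
  · intro u hu
    rw [card_eq_one_iff_existsUnique]
    simpa [bipartiteBelow] using MP.existsUnique_circle_superset (mem_powersetCard.1 hu).2

def pencil (p b : S) : Set (Set S) := {C ∈ MP.circles | p ∈ C ∧ b ∈ C}

theorem card_pencil_mul_add_two {k : ℕ} (hk : ∀ C ∈ MP.circles, Nat.card C = k)
    {p b : S} (hpb : p ≠ b) : Nat.card (MP.pencil p b) * (k - 2) + 2 = Fintype.card S := by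
  classical
  have hpb_univ : ({p, b} : Finset S) ⊆ univ := subset_univ _
  have htwo : 2 ≤ Fintype.card S := card_pair hpb ▸ card_le_univ {p, b}
  have := card_mul_eq_card_mul (fun C (c : S) => c ∈ C)
    (s := (MP.pencil p b).toFinset) (t := univ \ {p, b}) (m := k - 2) (n := 1) ?_ ?_
  · rw [← Nat.card_eq_card_toFinset, card_sdiff_of_subset hpb_univ, card_pair hpb,
      card_univ] at this
    omega
  · rintro C hC
    obtain ⟨hC, hpC, hbC⟩ := Set.mem_toFinset.1 hC
    rw [← hk C hC, Nat.card_eq_card_toFinset, ← card_pair hpb, ← card_sdiff_of_subset]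
    · congr 1
      ext c
      simp [bipartiteAbove, and_comm]
    · simp [Set.insert_subset_iff, hpC, hbC]
  · intro c hc
    simp only [mem_sdiff, mem_univ, mem_insert, mem_singleton, not_or, true_and] at hc
    rw [card_eq_one_iff_existsUnique, bipartiteBelow]
    simp only [mem_filter, Set.mem_toFinset]
    simpa only [pencil, Set.mem_ofPred_eq, and_assoc] using
      MP.M1 p b c hpb (Ne.symm hc.2) (Ne.symm hc.1)

theorem card_pencil_eq_card {A : Set S} (hA : A ∈ MP.circles) {p b : S} (hpA : p ∈ A)
    (hbA : b ∉ A) : Nat.card (MP.pencil p b) = Nat.card A := by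
  classical
  have hpb : p ≠ b := fun h => hbA (h ▸ hpA)
  have hAC {C : Set S} (hbC : b ∈ C) : A ≠ C := fun h => hbA (h ▸ hbC)
  -- `C` corresponds to `a` when `A ∩ C = {p, a}`; the tangent circle of (M2) to `a = p`.
  have := card_mul_eq_card_mul (fun C a => A ∩ C = {p, a})
    (s := (MP.pencil p b).toFinset) (t := A.toFinset) (m := 1) (n := 1) ?_ ?_
  · simpa [Nat.card_eq_card_toFinset] using this
  · intro C hC
    obtain ⟨hC, hpC, hbC⟩ := Set.mem_toFinset.1 hC
    rw [card_eq_one_iff_existsUnique, bipartiteAbove]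
    simp only [mem_filter, Set.mem_toFinset]
    obtain ⟨a, ha⟩ := MP.exists_inter_eq_pair hA hC (hAC hbC) hpA hpC
    have haA : a ∈ A ∩ C := ha ▸ Set.mem_insert_of_mem p rfl
    refine ⟨a, ⟨haA.1, ha⟩, fun a' ⟨_, ha'⟩ => ?_⟩
    rcases Set.pair_eq_pair_iff.1 (ha'.symm.trans ha) with ⟨-, h⟩ | ⟨h₁, h₂⟩
    exacts [h, h₂.trans h₁]
  · intro a haA
    rw [Set.mem_toFinset] at haA
    rw [card_eq_one_iff_existsUnique, bipartiteBelow]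
    simp only [mem_filter, Set.mem_toFinset]
    obtain rfl | hap := eq_or_ne a p
    · simpa only [pencil, Set.mem_ofPred_eq, Set.pair_eq_singleton, and_assoc] using
        MP.M2 A hA a hpA b hbA
    obtain ⟨C, ⟨hC, hpC, hbC, haC⟩, huniq⟩ :=
      MP.M1 p b a hpb (fun h => hbA (h ▸ haA)) hap.symm
    refine ⟨C, ⟨⟨hC, hpC, hbC⟩, ?_⟩, fun D ⟨⟨hD, hpD, hbD⟩, hAD⟩ =>
      huniq D ⟨hD, hpD, hbD, (hAD ▸ Set.mem_insert_of_mem p rfl : a ∈ A ∩ D).2⟩⟩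
    obtain ⟨a', ha'⟩ := MP.exists_inter_eq_pair hA hC (hAC hbC) hpA hpC
    have : a ∈ ({p, a'} : Set S) := ha' ▸ ⟨haA, haC⟩
    rcases this with h | rfl
    exacts [absurd h hap, ha']

theorem card_eq_sq_add_one {q : ℕ} (hq : 1 ≤ q)
    (hcirc : ∀ C ∈ MP.circles, Nat.card C = q + 1) : Fintype.card S = q ^ 2 + 1 := by
  obtain ⟨-, x, hx, hxA⟩ := MP.M3
  obtain ⟨A, ⟨hA, hx₀, -⟩, -⟩ :=
    MP.M1 (x 0) (x 1) (x 2) (hx.ne (by decide)) (hx.ne (by decide)) (hx.ne (by decide))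
  obtain ⟨i, hiA⟩ : ∃ i, x i ∉ A := by simpa using hxA A hA
  have h := MP.card_pencil_mul_add_two hcirc (p := x 0) (b := x i) (fun h => hiA (h ▸ hx₀))
  rw [MP.card_pencil_eq_card hA hx₀ hiA, hcirc A hA] at h
  obtain ⟨r, rfl⟩ := Nat.exists_eq_add_of_le' hq
  rw [← h, show r + 1 + 1 - 2 = r by omega]
  ring

end FiniteMoebiusPlane

theorem Nat.six_mul_choose_three_add_three (n : ℕ) :
    6 * (n + 3).choose 3 = (n + 3) * (n + 2) * (n + 1) := by
  rw [show 6 = Nat.factorial 3 from rfl, ← Nat.descFactorial_eq_factorial_mul_choose]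
  simp only [Nat.succ_descFactorial_succ, Nat.descFactorial_zero]
  ring

theorem Nat.choose_sq_add_one_three (q : ℕ) :
    (q ^ 2 + 1).choose 3 = q * (q ^ 2 + 1) * (q + 1).choose 3 := by
  obtain _ | _ | r := q
  · rfl
  · rfl
  · have h := Nat.six_mul_choose_three_add_three (r ^ 2 + 4 * r + 2)
    have h' := Nat.six_mul_choose_three_add_three r
    rw [show (r + 2) ^ 2 + 1 = r ^ 2 + 4 * r + 2 + 3 by ring]
    apply Nat.eq_of_mul_eq_mul_left (show 0 < 6 by norm_num)
    rw [h, mul_left_comm, h']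
    ring

/-- In a finite Möbius plane in which every circle contains exactly `q + 1` points
(`q ≥ 2`), the total number of circles is `q·(q² + 1)`. -/
theorem moebius_card_circles (S : Type*) [Fintype S]
    (MP : FiniteMoebiusPlane S) (q : ℕ) (hq : 2 ≤ q)
    (hcirc : ∀ C ∈ MP.circles, Nat.card ↥C = q + 1) :
    Nat.card ↥MP.circles = q * (q ^ 2 + 1) := by
  have hcount := MP.card_circles_mul_choose_three hcirc
  rw [MP.card_eq_sq_add_one (by omega) hcirc, Nat.choose_sq_add_one_three] at hcount
  exact Nat.eq_of_mul_eq_mul_right (Nat.choose_pos (by omega)) hcount
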